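/- For every integer n ≥ 3, 2 · ∑_T B(T) = (n − 1) · C_{n−2}, the sum ranging over all triangulations T of P_n; equivalently, the expected value of B under a uniformly random triangulation of P_n is (n−1)/2. -/

import Mathlib

open Finset
open scoped Classical

/-- `IsDiag l r i j` : the pair `{i, j}` (written with `i < j`) is a diagonal of the
convex sub-polygon on vertices `{l, …, r}`. -/
def IsDiag (l r i j : ℕ) : Prop :=
  l ≤ i ∧ i + 2 ≤ j ∧ j ≤ r ∧ ¬(i = l ∧ j = r)

/-- Two diagonals `{a, b}` and `{c, d}` (written with `a < b`, `c < d`) cross. -/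
def Crosses (a b c d : ℕ) : Prop :=
  (a < c ∧ c < b ∧ b < d) ∨ (c < a ∧ a < d ∧ d < b)

/-- All diagonals of the sub-polygon on `{l, …, r}`, as ordered pairs. -/
noncomputable def allDiags (l r : ℕ) : Finset (ℕ × ℕ) :=
  (range (r + 1) ×ˢ range (r + 1)).filter fun p => IsDiag l r p.1 p.2

/-- The triangulations of the sub-polygon on `{l, …, r}` : sets of `r - l - 2`
pairwise noncrossing diagonals. -/
noncomputable def triangulations (l r : ℕ) : Finset (Finset (ℕ × ℕ)) :=
  (allDiags l r).powerset.filter fun T =>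
    T.card = r - l - 2 ∧ ∀ d ∈ T, ∀ e ∈ T, ¬ Crosses d.1 d.2 e.1 e.2

/-- `IsEdge l r i j` : the pair `{i, j}` (with `i < j`) is an edge (boundary side) of the
sub-polygon on `{l, …, r}`. -/
def IsEdge (l r i j : ℕ) : Prop :=
  (l ≤ i ∧ j = i + 1 ∧ j ≤ r) ∨ (i = l ∧ j = r)

/-- `{i, j}` is a side available in the triangulation `T` (an edge of the polygon or a
diagonal of `T`). -/
def IsSide (l r : ℕ) (T : Finset (ℕ × ℕ)) (i j : ℕ) : Prop :=
  IsEdge l r i j ∨ (i, j) ∈ T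

/-- The triangles of a triangulation `T` of the sub-polygon on `{l, …, r}`, as ordered
triples `(a, b, c)` with `a < b < c`, each of whose three sides is an edge or a diagonal
of `T`. -/
noncomputable def triangles (l r : ℕ) (T : Finset (ℕ × ℕ)) : Finset (ℕ × ℕ × ℕ) :=
  (range (r + 1) ×ˢ range (r + 1) ×ˢ range (r + 1)).filter fun t =>
    t.1 < t.2.1 ∧ t.2.1 < t.2.2 ∧
      IsSide l r T t.1 t.2.1 ∧ IsSide l r T t.2.1 t.2.2 ∧ IsSide l r T t.1 t.2.2

/-- The number of sides of the triangle `{a, b, c}` (with `a < b < c`) that are edges of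
the sub-polygon on `{l, …, r}`. -/
noncomputable def edgeCount (l r a b c : ℕ) : ℕ :=
  (if IsEdge l r a b then 1 else 0) + (if IsEdge l r b c then 1 else 0) +
    (if IsEdge l r a c then 1 else 0)

/-- `O(T)` : the number of triangles of `T` with exactly one side an edge of `P_n`. -/
noncomputable def oneSideCount (n : ℕ) (T : Finset (ℕ × ℕ)) : ℕ :=
  ((triangles 1 n T).filter fun t => edgeCount 1 n t.1 t.2.1 t.2.2 = 1).card

/-- `Ear(T)` : the number of triangles of `T` with at least two sides edges of `P_n`. -/
noncomputable def earCount (n : ℕ) (T : Finset (ℕ × ℕ)) : ℕ :=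
  ((triangles 1 n T).filter fun t => 2 ≤ edgeCount 1 n t.1 t.2.1 t.2.2).card

/-- `D(T)` : the number of triangles of `T` containing vertex `1`. -/
noncomputable def degOne (n : ℕ) (T : Finset (ℕ × ℕ)) : ℕ :=
  ((triangles 1 n T).filter fun t => t.1 = 1 ∨ t.2.1 = 1 ∨ t.2.2 = 1).card

/-- `B(T)` : the number of triangles `{l, j, r}` of `T` (with `l < j < r`) such that
`j - l = 1`. -/
noncomputable def blueCount (n : ℕ) (T : Finset (ℕ × ℕ)) : ℕ :=
  ((triangles 1 n T).filter fun t => t.2.1 - t.1 = 1).card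

/-- `A_i(T)` : the number of triangles `{1, a, b}` of `T` containing vertex `1`
(written with `1 < a < b`) such that `b - a = i`. -/
noncomputable def angleCount (n : ℕ) (T : Finset (ℕ × ℕ)) (i : ℕ) : ℕ :=
  ((triangles 1 n T).filter fun t => t.1 = 1 ∧ t.2.2 - t.2.1 = i).card

/-!
Every edge `{i, i + 1}` of the polygon is a side of exactly one triangle `{a, b, c}` (`a < b < c`)
of a triangulation `T`, either as `{a, b}` (the triangles counted by `B`) or as `{b, c}`; hence
`B(T) + R(T) = n - 1`, where `R(T)` counts the triangles with `c - b = 1`. The reflection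
`i ↦ n + 1 - i` permutes the triangulations and exchanges `B` and `R`, so `∑ B = ∑ R` and
`2 ∑ B = (n - 1) · #triangulations`. Both the edge count and `#triangulations = C_{n-2}` follow by
cutting a triangulation of `{l, …, r}` along the triangle `{l, j, r}` on the side `{l, r}` into
triangulations of `{l, …, j}` and `{j, …, r}`.
-/

def Noncrossing (D : Finset (ℕ × ℕ)) : Prop :=
  ∀ d ∈ D, ∀ e ∈ D, ¬ Crosses d.1 d.2 e.1 e.2

-- The triangulation of `{l, …, r}` with triangle `{l, j, r}` on the side `{l, r}`, glued from
-- triangulations `T₁` of `{l, …, j}` and `T₂` of `{j, …, r}`; `{l, j}` and `{j, r}` are added only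
-- when they are diagonals rather than polygon edges.
noncomputable def glue (l j r : ℕ) (T₁ T₂ : Finset (ℕ × ℕ)) : Finset (ℕ × ℕ) :=
  T₁ ∪ T₂ ∪ ((if l + 2 ≤ j then {(l, j)} else ∅) ∪ (if j + 2 ≤ r then {(j, r)} else ∅))

section Basic

variable {l r : ℕ} {D T : Finset (ℕ × ℕ)}

theorem Noncrossing.mono (h : D ⊆ T) (hT : Noncrossing T) : Noncrossing D :=
  fun d hd e he => hT d (h hd) e (h he)

theorem Noncrossing.insert {d : ℕ × ℕ} (hT : Noncrossing T)
    (hd : ∀ e ∈ T, ¬ Crosses d.1 d.2 e.1 e.2) : Noncrossing (insert d T) := by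
  intro a ha b hb
  rcases mem_insert.mp ha with rfl | ha' <;> rcases mem_insert.mp hb with rfl | hb'
  · unfold Crosses; omega
  · exact hd b hb'
  · exact fun h => hd a ha' (Or.symm h)
  · exact hT a ha' b hb'

theorem mem_allDiags {p : ℕ × ℕ} : p ∈ allDiags l r ↔ IsDiag l r p.1 p.2 := by
  simp only [allDiags, mem_filter, mem_product, mem_range, and_iff_right_iff_imp]
  unfold IsDiag
  omega

theorem mem_triangulations :
    T ∈ triangulations l r ↔ T ⊆ allDiags l r ∧ #T = r - l - 2 ∧ Noncrossing T := by
  simp only [triangulations, mem_filter, mem_powerset, Noncrossing]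

theorem allDiags_eq_empty (h : r ≤ l + 2) : allDiags l r = ∅ := by
  ext p
  simp only [mem_allDiags, IsDiag, notMem_empty, iff_false]
  omega

theorem triangulations_eq_singleton_empty (h : r ≤ l + 2) : triangulations l r = {∅} := by
  ext T
  simp only [mem_triangulations, allDiags_eq_empty h, subset_empty, mem_singleton,
    and_iff_left_iff_imp]
  rintro rfl
  exact ⟨by rw [card_empty]; omega, by simp [Noncrossing]⟩

theorem IsSide.bounds (hT : T ⊆ allDiags l r) {a b : ℕ} (h : IsSide l r T a b) :
    l ≤ a ∧ b ≤ r := by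
  rcases h with h | h
  · unfold IsEdge at h; omega
  · have := mem_allDiags.mp (hT h); unfold IsDiag at this; omega

theorem IsSide.mem {a b : ℕ} (h : IsSide l r T a b) (hab : a + 2 ≤ b)
    (hlr : ¬(a = l ∧ b = r)) : (a, b) ∈ T := by
  rcases h with h | h
  · unfold IsEdge at h; omega
  · exact h

theorem IsSide.not_crosses (hT : T ⊆ allDiags l r) (hX : Noncrossing T) {a b : ℕ}
    (h : IsSide l r T a b) {p : ℕ × ℕ} (hp : p ∈ T) : ¬ Crosses p.1 p.2 a b := by
  rcases h with h | h
  · have := mem_allDiags.mp (hT hp)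
    unfold IsEdge at h; unfold IsDiag at this; unfold Crosses; omega
  · exact hX p hp _ h

theorem mem_triangles (hT : T ⊆ allDiags l r) {a b c : ℕ} :
    (a, b, c) ∈ triangles l r T ↔
      a < b ∧ b < c ∧ IsSide l r T a b ∧ IsSide l r T b c ∧ IsSide l r T a c := by
  simp only [triangles, mem_filter, mem_product, mem_range, and_iff_right_iff_imp]
  rintro ⟨hab, hbc, -, -, h⟩
  have := h.bounds hT
  omega

theorem triangles_eq_empty (hT : T ⊆ allDiags l r) (h : r ≤ l + 1) : triangles l r T = ∅ := by
  ext ⟨a, b, c⟩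
  simp only [mem_triangles hT, notMem_empty, iff_false]
  rintro ⟨hab, hbc, -, -, hs⟩
  have := hs.bounds hT
  omega

end Basic

section Glue

variable {l j r : ℕ} {T₁ T₂ : Finset (ℕ × ℕ)}

theorem mem_glue {p : ℕ × ℕ} :
    p ∈ glue l j r T₁ T₂ ↔
      p ∈ T₁ ∨ p ∈ T₂ ∨ (l + 2 ≤ j ∧ p = (l, j)) ∨ (j + 2 ≤ r ∧ p = (j, r)) := by
  unfold glue
  split_ifs <;> simp only [mem_union, mem_singleton, notMem_empty, true_and, false_and, false_or,
    or_false, or_assoc, *]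

theorem card_glue (hlj : l < j) (h₁ : T₁ ⊆ allDiags l j) (h₂ : T₂ ⊆ allDiags j r) :
    #(glue l j r T₁ T₂) =
      #T₁ + #T₂ + (if l + 2 ≤ j then 1 else 0) + (if j + 2 ≤ r then 1 else 0) := by
  have d₁ : ∀ p ∈ T₁, IsDiag l j p.1 p.2 := fun p hp => mem_allDiags.mp (h₁ hp)
  have d₂ : ∀ p ∈ T₂, IsDiag j r p.1 p.2 := fun p hp => mem_allDiags.mp (h₂ hp)
  have hne : ∀ p ∈ T₁ ∪ T₂, p ≠ (l, j) ∧ p ≠ (j, r) := by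
    intro p hp
    rcases mem_union.mp hp with hp | hp <;> [have := d₁ p hp; have := d₂ p hp] <;>
      constructor <;> rintro rfl <;> unfold IsDiag at this <;> omega
  unfold glue
  rw [card_union_of_disjoint, card_union_of_disjoint, card_union_of_disjoint]
  · split_ifs <;> simp
  · split_ifs <;> simp only [disjoint_singleton_left, disjoint_singleton_right, mem_singleton,
      notMem_empty, Prod.mk.injEq, disjoint_self, bot_eq_empty, not_false_eq_true, not_and]
    omega
  · exact disjoint_left.mpr fun p hp hp' => by
      have := d₁ p hp; have := d₂ p hp'; unfold IsDiag at *; omega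
  · refine disjoint_left.mpr fun p hp hpE => ?_
    have : p = (l, j) ∨ p = (j, r) := by
      split_ifs at hpE <;>
        simp only [mem_union, mem_singleton, notMem_empty, or_false, false_or] at hpE <;> tauto
    have := hne p hp
    tauto

theorem glue_subset (hlj : l < j) (hjr : j < r) (h₁ : T₁ ⊆ allDiags l j)
    (h₂ : T₂ ⊆ allDiags j r) : glue l j r T₁ T₂ ⊆ allDiags l r := by
  intro p hp
  rw [mem_allDiags]
  rcases mem_glue.mp hp with hp | hp | ⟨h, rfl⟩ | ⟨h, rfl⟩
  · have := mem_allDiags.mp (h₁ hp); unfold IsDiag at *; omega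
  · have := mem_allDiags.mp (h₂ hp); unfold IsDiag at *; omega
  all_goals unfold IsDiag; omega

theorem glue_inter_allDiags_left (h₁ : T₁ ⊆ allDiags l j) (h₂ : T₂ ⊆ allDiags j r) :
    glue l j r T₁ T₂ ∩ allDiags l j = T₁ := by
  ext p
  simp only [mem_inter, mem_glue]
  refine ⟨fun ⟨hp, hpd⟩ => ?_, fun hp => ⟨Or.inl hp, h₁ hp⟩⟩
  have := mem_allDiags.mp hpd
  rcases hp with hp | hp | ⟨-, rfl⟩ | ⟨-, rfl⟩
  · exact hp
  · have := mem_allDiags.mp (h₂ hp); unfold IsDiag at *; omega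
  all_goals unfold IsDiag at *; omega

theorem glue_inter_allDiags_right (h₁ : T₁ ⊆ allDiags l j) (h₂ : T₂ ⊆ allDiags j r) :
    glue l j r T₁ T₂ ∩ allDiags j r = T₂ := by
  ext p
  simp only [mem_inter, mem_glue]
  refine ⟨fun ⟨hp, hpd⟩ => ?_, fun hp => ⟨Or.inr (Or.inl hp), h₂ hp⟩⟩
  have := mem_allDiags.mp hpd
  rcases hp with hp | hp | ⟨-, rfl⟩ | ⟨-, rfl⟩
  · have := mem_allDiags.mp (h₁ hp); unfold IsDiag at *; omega
  · exact hp
  all_goals unfold IsDiag at *; omega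

theorem isSide_glue (hlj : l < j) (hjr : j < r) {a b : ℕ} :
    IsSide l r (glue l j r T₁ T₂) a b ↔
      IsSide l j T₁ a b ∨ IsSide j r T₂ a b ∨ (a = l ∧ b = r) := by
  unfold IsSide IsEdge
  rw [mem_glue]
  by_cases h₁ : (a, b) ∈ T₁ <;> by_cases h₂ : (a, b) ∈ T₂ <;>
    simp only [h₁, h₂, Prod.mk.injEq, true_or, or_true, or_self, false_or, or_false]
  omega

theorem isSide_glue_left (hlj : l < j) (hjr : j < r) : IsSide l r (glue l j r T₁ T₂) l j :=
  (isSide_glue hlj hjr).mpr (Or.inl (Or.inl (Or.inr ⟨rfl, rfl⟩)))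

theorem isSide_glue_right (hlj : l < j) (hjr : j < r) : IsSide l r (glue l j r T₁ T₂) j r :=
  (isSide_glue hlj hjr).mpr (Or.inr (Or.inl (Or.inl (Or.inr ⟨rfl, rfl⟩))))

end Glue

section Decomposition

variable {l j r : ℕ} {D T : Finset (ℕ × ℕ)}

theorem subset_glue_of_split (hD : D ⊆ allDiags l r) (hj : ∀ p ∈ D, ¬(p.1 < j ∧ j < p.2)) :
    D ⊆ glue l j r (D ∩ allDiags l j) (D ∩ allDiags j r) := by
  intro p hp
  have := mem_allDiags.mp (hD hp)
  have := hj p hp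
  simp only [mem_glue, mem_inter, mem_allDiags, hp, true_and, Prod.ext_iff]
  unfold IsDiag at *
  omega

-- Take `j` farthest from `l` along a side of `D`: a diagonal jumping over `j` would either start at
-- `l`, contradicting the choice of `j`, or cross the side `{l, j}`.
theorem exists_split (hD : D ⊆ allDiags l r) (hX : Noncrossing D) (h : l + 2 ≤ r) :
    ∃ j, l < j ∧ j < r ∧ IsSide l r D l j ∧ ∀ p ∈ D, ¬(p.1 < j ∧ j < p.2) := by
  let P b := l < b ∧ IsSide l r D l b
  have hP : P (l + 1) := ⟨by omega, Or.inl (Or.inl ⟨le_rfl, rfl, by omega⟩)⟩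
  obtain ⟨hlj, hside⟩ : P (Nat.findGreatest P (r - 1)) := Nat.findGreatest_spec (by omega) hP
  have hjr := Nat.findGreatest_le (P := P) (r - 1)
  refine ⟨_, hlj, by omega, hside, fun p hp hpj => ?_⟩
  have hpd := mem_allDiags.mp (hD hp)
  unfold IsDiag at hpd
  by_cases hpl : p.1 = l
  · have : p.2 ≤ Nat.findGreatest P (r - 1) :=
      Nat.le_findGreatest (by omega) ⟨by omega, Or.inr (by rw [← hpl]; exact hp)⟩
    omega
  · exact hside.not_crosses hD hX hp (by unfold Crosses; omega)

theorem Noncrossing.card_le {l r : ℕ} {D : Finset (ℕ × ℕ)} (hD : D ⊆ allDiags l r)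
    (hX : Noncrossing D) : #D ≤ r - l - 2 := by
  by_cases h : r ≤ l + 2
  · rw [allDiags_eq_empty h, subset_empty] at hD
    simp [hD]
  obtain ⟨j, hlj, hjr, -, hsplit⟩ := exists_split hD hX (by omega)
  have h₁ := Noncrossing.card_le (l := l) (r := j) inter_subset_right (hX.mono inter_subset_left)
  have h₂ := Noncrossing.card_le (l := j) (r := r) inter_subset_right (hX.mono inter_subset_left)
  have := card_le_card (subset_glue_of_split hD hsplit)
  rw [card_glue hlj inter_subset_right inter_subset_right] at this
  split_ifs at this <;> omega
termination_by r - l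

theorem mem_of_noncrossing_insert (hT : T ∈ triangulations l r) {d : ℕ × ℕ}
    (hd : d ∈ allDiags l r) (hX : Noncrossing (insert d T)) : d ∈ T := by
  obtain ⟨hsub, hcard, -⟩ := mem_triangulations.mp hT
  by_contra hdT
  have := hX.card_le (insert_subset hd hsub)
  rw [card_insert_of_notMem hdT] at this
  have := mem_allDiags.mp hd
  unfold IsDiag at this
  omega

theorem exists_apex (hT : T ∈ triangulations l r) (h : l + 2 ≤ r) :
    ∃ j, l < j ∧ j < r ∧ IsSide l r T l j ∧ IsSide l r T j r := by
  obtain ⟨hsub, -, hX⟩ := mem_triangulations.mp hT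
  obtain ⟨j, hlj, hjr, hside, hsplit⟩ := exists_split hsub hX h
  refine ⟨j, hlj, hjr, hside, ?_⟩
  by_cases hj : j + 1 = r
  · exact Or.inl (Or.inl ⟨hlj.le, hj.symm, le_rfl⟩)
  refine Or.inr (mem_of_noncrossing_insert hT ?_ (hX.insert fun e he => ?_))
  · exact mem_allDiags.mpr ⟨by omega, by omega, le_rfl, by omega⟩
  · have := mem_allDiags.mp (hsub he)
    have := hsplit e he
    unfold IsDiag at *; unfold Crosses; omega

theorem apex_unique (hT : T ⊆ allDiags l r) (hX : Noncrossing T) {j' : ℕ}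
    (hlj : l < j) (hjr : j < r) (h₁ : IsSide l r T l j) (h₂ : IsSide l r T j r)
    (hlj' : l < j') (hj'r : j' < r) (h₁' : IsSide l r T l j') (h₂' : IsSide l r T j' r) :
    j = j' := by
  by_contra hne
  wlog hlt : j < j' generalizing j j'
  · exact this hlj' hj'r h₁' h₂' hlj hjr h₁ h₂ (Ne.symm hne) (by omega)
  exact h₁'.not_crosses hT hX (h₂.mem (by omega) (by omega)) (by unfold Crosses; omega)

theorem eq_glue_of_apex (hT : T ⊆ allDiags l r) (hX : Noncrossing T) (hlj : l < j)
    (hjr : j < r) (h₁ : IsSide l r T l j) (h₂ : IsSide l r T j r) :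
    T = glue l j r (T ∩ allDiags l j) (T ∩ allDiags j r) := by
  refine (subset_glue_of_split hT fun p hp hpj => ?_).antisymm fun p hp => ?_
  · have := h₁.not_crosses hT hX hp
    have := h₂.not_crosses hT hX hp
    have := mem_allDiags.mp (hT hp)
    unfold Crosses IsDiag at *
    omega
  · rcases mem_glue.mp hp with hp | hp | ⟨h, rfl⟩ | ⟨h, rfl⟩
    · exact mem_of_mem_inter_left hp
    · exact mem_of_mem_inter_left hp
    · exact h₁.mem h (by omega)
    · exact h₂.mem h (by omega)

theorem exists_eq_glue (hT : T ∈ triangulations l r) (h : l + 2 ≤ r) :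
    ∃ j ∈ Ioo l r, ∃ T₁ ∈ triangulations l j, ∃ T₂ ∈ triangulations j r,
      T = glue l j r T₁ T₂ := by
  obtain ⟨hsub, hcard, hX⟩ := mem_triangulations.mp hT
  obtain ⟨j, hlj, hjr, h₁, h₂⟩ := exists_apex hT h
  have heq := eq_glue_of_apex hsub hX hlj hjr h₁ h₂
  have hc₁ := Noncrossing.card_le (l := l) (r := j) inter_subset_right (hX.mono inter_subset_left)
  have hc₂ := Noncrossing.card_le (l := j) (r := r) inter_subset_right (hX.mono inter_subset_left)
  have hc := card_glue (r := r) hlj (inter_subset_right (s₁ := T) (s₂ := allDiags l j))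
    (inter_subset_right (s₁ := T) (s₂ := allDiags j r))
  rw [← heq, hcard] at hc
  refine ⟨j, mem_Ioo.mpr ⟨hlj, hjr⟩,
    _, mem_triangulations.mpr ⟨inter_subset_right, ?_, hX.mono inter_subset_left⟩,
    _, mem_triangulations.mpr ⟨inter_subset_right, ?_, hX.mono inter_subset_left⟩, heq⟩ <;>
  split_ifs at hc <;> omega

end Decomposition

section Counting

variable {l j r : ℕ} {T₁ T₂ : Finset (ℕ × ℕ)}

theorem Noncrossing.union {A B : Finset (ℕ × ℕ)} (hA : Noncrossing A) (hB : Noncrossing B)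
    (hAj : ∀ p ∈ A, p.2 ≤ j) (hBj : ∀ p ∈ B, j ≤ p.1) : Noncrossing (A ∪ B) := by
  intro d hd e he
  rcases mem_union.mp hd with hd | hd <;> rcases mem_union.mp he with he | he
  · exact hA d hd e he
  · have := hAj d hd; have := hBj e he; unfold Crosses; omega
  · have := hBj d hd; have := hAj e he; unfold Crosses; omega
  · exact hB d hd e he

theorem noncrossing_glue (h₁ : T₁ ⊆ allDiags l j) (h₂ : T₂ ⊆ allDiags j r)
    (hX₁ : Noncrossing T₁) (hX₂ : Noncrossing T₂) : Noncrossing (glue l j r T₁ T₂) := by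
  have d₁ : ∀ p ∈ T₁, IsDiag l j p.1 p.2 := fun p hp => mem_allDiags.mp (h₁ hp)
  have d₂ : ∀ p ∈ T₂, IsDiag j r p.1 p.2 := fun p hp => mem_allDiags.mp (h₂ hp)
  have hL : Noncrossing (insert (l, j) T₁) := hX₁.insert fun e he => by
    have := d₁ e he; unfold IsDiag at this; unfold Crosses; omega
  have hR : Noncrossing (insert (j, r) T₂) := hX₂.insert fun e he => by
    have := d₂ e he; unfold IsDiag at this; unfold Crosses; omega
  refine (hL.union hR (j := j) ?_ ?_).mono fun p hp => ?_
  · exact forall_mem_insert _ _ _ |>.mpr ⟨le_rfl, fun p hp => (d₁ p hp).2.2.1⟩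
  · exact forall_mem_insert _ _ _ |>.mpr ⟨le_rfl, fun p hp => (d₂ p hp).1⟩
  · rcases mem_glue.mp hp with hp | hp | ⟨-, rfl⟩ | ⟨-, rfl⟩ <;> simp [hp]

theorem glue_mem_triangulations (hlj : l < j) (hjr : j < r) (h₁ : T₁ ∈ triangulations l j)
    (h₂ : T₂ ∈ triangulations j r) : glue l j r T₁ T₂ ∈ triangulations l r := by
  obtain ⟨hs₁, hc₁, hX₁⟩ := mem_triangulations.mp h₁
  obtain ⟨hs₂, hc₂, hX₂⟩ := mem_triangulations.mp h₂
  refine mem_triangulations.mpr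
    ⟨glue_subset hlj hjr hs₁ hs₂, ?_, noncrossing_glue hs₁ hs₂ hX₁ hX₂⟩
  rw [card_glue hlj hs₁ hs₂, hc₁, hc₂]
  split_ifs <;> omega

theorem card_image_glue :
    #((triangulations l j ×ˢ triangulations j r).image fun q => glue l j r q.1 q.2) =
      #(triangulations l j) * #(triangulations j r) := by
  rw [card_image_of_injOn, card_product]
  rintro ⟨T₁, T₂⟩ hq ⟨T₁', T₂'⟩ hq' heq
  simp only [coe_product, Set.mem_prod, mem_coe, mem_triangulations] at hq hq' heq
  have e₁ := glue_inter_allDiags_left hq.1.1 hq.2.1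
  have e₂ := glue_inter_allDiags_right hq.1.1 hq.2.1
  rw [heq, glue_inter_allDiags_left hq'.1.1 hq'.2.1] at e₁
  rw [heq, glue_inter_allDiags_right hq'.1.1 hq'.2.1] at e₂
  rw [e₁, e₂]

theorem triangulations_eq_biUnion (h : l + 2 ≤ r) :
    triangulations l r = (Ioo l r).biUnion fun j =>
      (triangulations l j ×ˢ triangulations j r).image fun q => glue l j r q.1 q.2 := by
  ext T
  simp only [mem_biUnion, mem_image, mem_product, Prod.exists]
  constructor
  · intro hT
    obtain ⟨j, hj, T₁, h₁, T₂, h₂, rfl⟩ := exists_eq_glue hT h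
    exact ⟨j, hj, T₁, T₂, ⟨h₁, h₂⟩, rfl⟩
  · rintro ⟨j, hj, T₁, T₂, ⟨h₁, h₂⟩, rfl⟩
    exact glue_mem_triangulations (mem_Ioo.mp hj).1 (mem_Ioo.mp hj).2 h₁ h₂

theorem pairwiseDisjoint_image_glue : (Ioo l r : Set ℕ).PairwiseDisjoint fun j =>
    (triangulations l j ×ˢ triangulations j r).image fun q => glue l j r q.1 q.2 := by
  intro j hj j' hj' hne
  simp only [coe_Ioo, Set.mem_Ioo] at hj hj'
  simp only [Function.onFun, disjoint_left, mem_image, mem_product, Prod.exists, not_exists,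
    not_and]
  rintro _ ⟨T₁, T₂, ⟨h₁, h₂⟩, rfl⟩ T₁' T₂' - heq
  obtain ⟨hsub, -, hX⟩ := mem_triangulations.mp (glue_mem_triangulations hj.1 hj.2 h₁ h₂)
  refine hne (apex_unique hsub hX hj.1 hj.2 (isSide_glue_left hj.1 hj.2)
    (isSide_glue_right hj.1 hj.2) hj'.1 hj'.2 ?_ ?_)
  · rw [← heq]; exact isSide_glue_left hj'.1 hj'.2
  · rw [← heq]; exact isSide_glue_right hj'.1 hj'.2

theorem sum_Ioo_catalan_mul_catalan (h : l + 2 ≤ r) :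
    ∑ j ∈ Ioo l r, catalan (j - l - 1) * catalan (r - j - 1) = catalan (r - l - 1) := by
  obtain ⟨m, rfl⟩ : ∃ m, r = l + m + 2 := ⟨r - l - 2, by omega⟩
  rw [← Ico_add_one_left_eq_Ioo, sum_Ico_eq_sum_range, show l + m + 2 - l - 1 = m + 1 by omega,
    catalan_succ, Fin.sum_univ_eq_sum_range (fun i => catalan i * catalan (m - i)),
    show l + m + 2 - (l + 1) = m + 1 by omega]
  refine sum_congr rfl fun i hi => ?_
  rw [mem_range] at hi
  congr 2 <;> omega

theorem card_triangulations {l r : ℕ} (h : l < r) :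
    #(triangulations l r) = catalan (r - l - 1) := by
  by_cases h₁ : r = l + 1
  · rw [triangulations_eq_singleton_empty (by omega), card_singleton, h₁]
    simp
  rw [triangulations_eq_biUnion (by omega), card_biUnion pairwiseDisjoint_image_glue,
    ← sum_Ioo_catalan_mul_catalan (by omega)]
  refine sum_congr rfl fun j hj => ?_
  obtain ⟨hlj, hjr⟩ := mem_Ioo.mp hj
  rw [card_image_glue, card_triangulations hlj, card_triangulations hjr]
termination_by r - l

end Counting

noncomputable def leftEdgeCount (l r : ℕ) (T : Finset (ℕ × ℕ)) : ℕ :=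
  #{t ∈ triangles l r T | t.2.1 - t.1 = 1}

noncomputable def rightEdgeCount (l r : ℕ) (T : Finset (ℕ × ℕ)) : ℕ :=
  #{t ∈ triangles l r T | t.2.2 - t.2.1 = 1}

section Triangles

variable {l j r : ℕ} {T T₁ T₂ : Finset (ℕ × ℕ)}

theorem bounds_of_mem_triangles (hT : T ⊆ allDiags l r) {t : ℕ × ℕ × ℕ}
    (ht : t ∈ triangles l r T) : l ≤ t.1 ∧ t.1 < t.2.1 ∧ t.2.1 < t.2.2 ∧ t.2.2 ≤ r := by
  obtain ⟨a, b, c⟩ := t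
  obtain ⟨hab, hbc, -, -, hac⟩ := (mem_triangles hT).mp ht
  have := hac.bounds hT
  exact ⟨this.1, hab, hbc, this.2⟩

theorem isSide_glue_iff_left (hlj : l < j) (hjr : j < r) (h₂ : T₂ ⊆ allDiags j r) {a b : ℕ}
    (hab : a < b) (hbj : b ≤ j) : IsSide l r (glue l j r T₁ T₂) a b ↔ IsSide l j T₁ a b := by
  rw [isSide_glue hlj hjr]
  refine ⟨fun h => ?_, Or.inl⟩
  rcases h with h | h | h
  · exact h
  · have := h.bounds h₂; omega
  · omega

theorem isSide_glue_iff_right (hlj : l < j) (hjr : j < r) (h₁ : T₁ ⊆ allDiags l j) {a b : ℕ}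
    (hab : a < b) (hja : j ≤ a) : IsSide l r (glue l j r T₁ T₂) a b ↔ IsSide j r T₂ a b := by
  rw [isSide_glue hlj hjr]
  refine ⟨fun h => ?_, fun h => Or.inr (Or.inl h)⟩
  rcases h with h | h | h
  · have := h.bounds h₁; omega
  · exact h
  · omega

theorem IsSide.eq_of_glue (hlj : l < j) (hjr : j < r) (h₁ : T₁ ⊆ allDiags l j)
    (h₂ : T₂ ⊆ allDiags j r) {a b : ℕ} (h : IsSide l r (glue l j r T₁ T₂) a b) (haj : a < j)
    (hjb : j < b) : a = l ∧ b = r := by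
  rcases (isSide_glue hlj hjr).mp h with h | h | h
  · have := h.bounds h₁; omega
  · have := h.bounds h₂; omega
  · exact h

theorem mem_triangles_glue (hlj : l < j) (hjr : j < r) (h₁ : T₁ ⊆ allDiags l j)
    (h₂ : T₂ ⊆ allDiags j r) {t : ℕ × ℕ × ℕ} :
    t ∈ triangles l r (glue l j r T₁ T₂) ↔
      t ∈ triangles l j T₁ ∨ t ∈ triangles j r T₂ ∨ t = (l, j, r) := by
  obtain ⟨a, b, c⟩ := t
  simp only [mem_triangles (glue_subset hlj hjr h₁ h₂), mem_triangles h₁, mem_triangles h₂,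
    Prod.mk.injEq]
  constructor
  · rintro ⟨hab, hbc, sab, sbc, sac⟩
    by_cases hcj : c ≤ j
    · exact Or.inl ⟨hab, hbc, (isSide_glue_iff_left hlj hjr h₂ hab (by omega)).mp sab,
        (isSide_glue_iff_left hlj hjr h₂ hbc hcj).mp sbc,
        (isSide_glue_iff_left hlj hjr h₂ (hab.trans hbc) hcj).mp sac⟩
    by_cases hja : j ≤ a
    · exact Or.inr (Or.inl ⟨hab, hbc, (isSide_glue_iff_right hlj hjr h₁ hab hja).mp sab,
        (isSide_glue_iff_right hlj hjr h₁ hbc (by omega)).mp sbc,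
        (isSide_glue_iff_right hlj hjr h₁ (hab.trans hbc) hja).mp sac⟩)
    obtain ⟨rfl, rfl⟩ := sac.eq_of_glue hlj hjr h₁ h₂ (by omega) (by omega)
    have : ¬ b < j := fun hbj => by have := sbc.eq_of_glue hlj hjr h₁ h₂ hbj (by omega); omega
    have : ¬ j < b := fun hjb => by have := sab.eq_of_glue hlj hjr h₁ h₂ (by omega) hjb; omega
    exact Or.inr (Or.inr ⟨rfl, by omega, rfl⟩)
  · rintro (⟨hab, hbc, sab, sbc, sac⟩ | ⟨hab, hbc, sab, sbc, sac⟩ | ⟨rfl, rfl, rfl⟩)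
    · simp only [isSide_glue hlj hjr]
      exact ⟨hab, hbc, Or.inl sab, Or.inl sbc, Or.inl sac⟩
    · simp only [isSide_glue hlj hjr]
      exact ⟨hab, hbc, Or.inr (Or.inl sab), Or.inr (Or.inl sbc), Or.inr (Or.inl sac)⟩
    · exact ⟨hlj, hjr, isSide_glue_left hlj hjr, isSide_glue_right hlj hjr,
        Or.inl (Or.inr ⟨rfl, rfl⟩)⟩

theorem card_filter_triangles_glue (hlj : l < j) (hjr : j < r) (h₁ : T₁ ⊆ allDiags l j)
    (h₂ : T₂ ⊆ allDiags j r) (P : ℕ × ℕ × ℕ → Prop) [DecidablePred P] :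
    #{t ∈ triangles l r (glue l j r T₁ T₂) | P t} =
      #{t ∈ triangles l j T₁ | P t} + #{t ∈ triangles j r T₂ | P t} +
        if P (l, j, r) then 1 else 0 := by
  have htri : triangles l r (glue l j r T₁ T₂) =
      triangles l j T₁ ∪ triangles j r T₂ ∪ {(l, j, r)} := by
    ext t
    simp only [mem_triangles_glue hlj hjr h₁ h₂, mem_union, mem_singleton, or_assoc]
  have h₁₂ : Disjoint (triangles l j T₁) (triangles j r T₂) :=
    disjoint_left.mpr fun t ht ht' => by
      have := bounds_of_mem_triangles h₁ ht; have := bounds_of_mem_triangles h₂ ht'; omega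
  have h₃ : (l, j, r) ∉ triangles l j T₁ ∪ triangles j r T₂ := fun h => by
    rcases mem_union.mp h with h | h
    · have := bounds_of_mem_triangles h₁ h; dsimp only at this; omega
    · have := bounds_of_mem_triangles h₂ h; dsimp only at this; omega
  rw [htri, filter_union, filter_union, card_union_of_disjoint, card_union_of_disjoint
    (disjoint_filter_filter h₁₂), filter_singleton]
  · split_ifs <;> simp
  · rw [← filter_union]
    exact disjoint_filter_filter (disjoint_singleton_right.mpr h₃)

end Triangles

-- Every polygon edge `{i, i + 1}` with `l ≤ i < r` is a side of exactly one triangle, where it is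
-- the side `{a, b}` or the side `{b, c}`; the polygon `r = l + 1` has its edge but no triangle.
theorem leftEdgeCount_add_rightEdgeCount {l r : ℕ} {T : Finset (ℕ × ℕ)}
    (hT : T ∈ triangulations l r) (h : l < r) :
    leftEdgeCount l r T + rightEdgeCount l r T + (if r = l + 1 then 1 else 0) = r - l := by
  by_cases h₁ : r = l + 1
  · rw [leftEdgeCount, rightEdgeCount, triangles_eq_empty (mem_triangulations.mp hT).1 h₁.le,
      if_pos h₁, h₁]
    simp
  obtain ⟨j, hj, T₁, hT₁, T₂, hT₂, rfl⟩ := exists_eq_glue hT (by omega)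
  obtain ⟨hlj, hjr⟩ := mem_Ioo.mp hj
  have s₁ := (mem_triangulations.mp hT₁).1
  have s₂ := (mem_triangulations.mp hT₂).1
  have ih₁ := leftEdgeCount_add_rightEdgeCount hT₁ hlj
  have ih₂ := leftEdgeCount_add_rightEdgeCount hT₂ hjr
  simp only [leftEdgeCount, rightEdgeCount, card_filter_triangles_glue hlj hjr s₁ s₂] at *
  split_ifs at * <;> omega
termination_by r - l

noncomputable def reflect (l r : ℕ) (T : Finset (ℕ × ℕ)) : Finset (ℕ × ℕ) :=
  T.image fun p => (l + r - p.2, l + r - p.1)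

section Reflection

variable {l r : ℕ} {T : Finset (ℕ × ℕ)}

theorem reflect_subset (hT : T ⊆ allDiags l r) : reflect l r T ⊆ allDiags l r := by
  intro p hp
  obtain ⟨q, hq, rfl⟩ := mem_image.mp hp
  have := mem_allDiags.mp (hT hq)
  rw [mem_allDiags]
  unfold IsDiag at *
  omega

theorem reflect_reflect (hT : T ⊆ allDiags l r) : reflect l r (reflect l r T) = T := by
  rw [reflect, reflect, image_image]
  conv_rhs => rw [← image_id (s := T)]
  refine image_congr fun p hp => ?_
  have := mem_allDiags.mp (hT hp)
  unfold IsDiag at this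
  simp only [Function.comp_apply, id_eq, Prod.ext_iff]
  omega

theorem reflect_mem_triangulations (hT : T ∈ triangulations l r) :
    reflect l r T ∈ triangulations l r := by
  obtain ⟨hsub, hcard, hX⟩ := mem_triangulations.mp hT
  have d : ∀ p ∈ T, IsDiag l r p.1 p.2 := fun p hp => mem_allDiags.mp (hsub hp)
  refine mem_triangulations.mpr ⟨reflect_subset hsub, ?_, ?_⟩
  · rw [reflect, card_image_of_injOn, hcard]
    intro p hp q hq hpq
    have := d p hp; have := d q hq
    simp only [Prod.ext_iff] at hpq ⊢
    unfold IsDiag at *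
    omega
  · intro p' hp' q' hq'
    obtain ⟨p, hp, rfl⟩ := mem_image.mp hp'
    obtain ⟨q, hq, rfl⟩ := mem_image.mp hq'
    have := d p hp; have := d q hq; have := hX p hp q hq
    unfold IsDiag Crosses at *
    omega

theorem IsSide.reflect (hT : T ⊆ allDiags l r) {a b : ℕ} (h : IsSide l r T a b) :
    IsSide l r (reflect l r T) (l + r - b) (l + r - a) := by
  have := h.bounds hT
  rcases h with h | h
  · left
    unfold IsEdge at h ⊢
    omega
  · exact Or.inr (mem_image.mpr ⟨(a, b), h, rfl⟩)

theorem reflect_mem_triangles (hT : T ⊆ allDiags l r) {t : ℕ × ℕ × ℕ}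
    (ht : t ∈ triangles l r T) :
    (l + r - t.2.2, l + r - t.2.1, l + r - t.1) ∈ triangles l r (reflect l r T) := by
  obtain ⟨a, b, c⟩ := t
  dsimp only
  obtain ⟨hab, hbc, sab, sbc, sac⟩ := (mem_triangles hT).mp ht
  have := sac.bounds hT
  exact (mem_triangles (reflect_subset hT)).mpr
    ⟨by omega, by omega, sbc.reflect hT, sab.reflect hT, sac.reflect hT⟩

theorem leftEdgeCount_eq_rightEdgeCount_reflect (hT : T ⊆ allDiags l r) :
    leftEdgeCount l r T = rightEdgeCount l r (reflect l r T) := by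
  have hT' := reflect_subset hT
  let σ : ℕ × ℕ × ℕ → ℕ × ℕ × ℕ := fun t => (l + r - t.2.2, l + r - t.2.1, l + r - t.1)
  have hσ : ∀ {S}, S ⊆ allDiags l r → ∀ t ∈ triangles l r S, σ (σ t) = t := by
    intro S hS t ht
    have := bounds_of_mem_triangles hS ht
    simp only [σ, Prod.ext_iff]
    omega
  refine card_nbij' σ σ (fun t ht => ?_) (fun t ht => ?_)
    (fun t ht => hσ hT t (mem_filter.mp ht).1) (fun t ht => hσ hT' t (mem_filter.mp ht).1)
  · obtain ⟨ht, h⟩ := mem_filter.mp ht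
    have := bounds_of_mem_triangles hT ht
    exact mem_filter.mpr ⟨reflect_mem_triangles hT ht, by simp only [σ]; omega⟩
  · obtain ⟨ht, h⟩ := mem_filter.mp ht
    have := bounds_of_mem_triangles hT' ht
    refine mem_filter.mpr ⟨?_, by simp only [σ]; omega⟩
    simpa only [reflect_reflect hT] using reflect_mem_triangles hT' ht

theorem sum_leftEdgeCount_eq_sum_rightEdgeCount :
    ∑ T ∈ triangulations l r, leftEdgeCount l r T =
      ∑ T ∈ triangulations l r, rightEdgeCount l r T := by
  refine sum_nbij' (reflect l r) (reflect l r) (fun T hT => reflect_mem_triangulations hT)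
    (fun T hT => reflect_mem_triangulations hT) (fun T hT => ?_) (fun T hT => ?_)
    (fun T hT => leftEdgeCount_eq_rightEdgeCount_reflect (mem_triangulations.mp hT).1)
  all_goals exact reflect_reflect (mem_triangulations.mp hT).1

end Reflection

/-- the expected number of triangles `{l, j, r}`, `l < j < r`, with
`j - l = 1` is `(n-1)/2` (Theorem 3(2)). -/
theorem blue_expectation (n : ℕ) (hn : 3 ≤ n) :
    2 * ∑ T ∈ triangulations 1 n, blueCount n T = (n - 1) * catalan (n - 2) := by
  have hedges : ∀ T ∈ triangulations 1 n, leftEdgeCount 1 n T + rightEdgeCount 1 n T = n - 1 :=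
    fun T hT => by
      have := leftEdgeCount_add_rightEdgeCount hT (by omega)
      rw [if_neg (by omega)] at this
      omega
  calc 2 * ∑ T ∈ triangulations 1 n, blueCount n T
      = ∑ T ∈ triangulations 1 n, (leftEdgeCount 1 n T + rightEdgeCount 1 n T) := by
        rw [sum_add_distrib, ← sum_leftEdgeCount_eq_sum_rightEdgeCount, two_mul]; rfl
    _ = ∑ T ∈ triangulations 1 n, (n - 1) := sum_congr rfl hedges
    _ = (n - 1) * catalan (n - 2) := by
        rw [sum_const, card_triangulations (by omega), smul_eq_mul, mul_comm, Nat.sub_sub]
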